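/- Let β be a mixed base and m ≥ 0. Define ℱ^β = {F ∈ ℕ^m : ∃ X ∈ ℕ^m, σ_β(X + F) = σ_β(X)}. If F ∈ ℱ^β then σ_β applied to F has 0-th digit 0, and (F̂ + r) ∈ ℱ^{β̂} for some r ∈ ρ(F), where β̂ = (β_1, β_2, ...), F̂ is the tuple of quotients of the f^i by β_0, and ρ(F) = {r ∈ {0,1}^m : r^i ≤ f^i_0 for all i}, with f^i_0 = f^i mod β_0 the 0-th digit of f^i. -/

import Mathlib

open scoped BigOperators

/-- β̂_L = β_0 ⋯ β_{L-1}, the place value of digit L in mixed base β. -/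
def bhat (β : ℕ → ℕ) (L : ℕ) : ℕ := ∏ i ∈ Finset.range L, β i

/-- The L-th digit of n in the mixed base β. -/
def mdigit (β : ℕ → ℕ) (n L : ℕ) : ℕ := n / bhat β L % β L

/-- Digit-wise addition modulo β_L in mixed base β. -/
def moplus (β : ℕ → ℕ) (n h : ℕ) : ℕ :=
  ∑ L ∈ Finset.range (n + h + 1), ((mdigit β n L + mdigit β h L) % β L) * bhat β L

/-- Digit-wise subtraction modulo β_L in mixed base β. -/
def mominus (β : ℕ → ℕ) (n h : ℕ) : ℕ :=
  ∑ L ∈ Finset.range (n + h + 1), ((β L + mdigit β n L - mdigit β h L) % β L) * bhat β L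

/-- σ_β(X) = x^0 ⊕ ⋯ ⊕ x^{m-1}: the digit-wise Nim sum in mixed base β. -/
def msigma (β : ℕ → ℕ) {m : ℕ} (X : Fin m → ℕ) : ℕ :=
  ∑ L ∈ Finset.range (∑ i, X i + 1), ((∑ i, mdigit β (X i) L) % β L) * bhat β L

/-- Hamming weight: number of nonzero components. -/
def hamwt {m : ℕ} (C : Fin m → ℕ) : ℕ := (Finset.univ.filter (fun i => C i ≠ 0)).card

/-- ord_β(n): the largest L with β̂_L ∣ n (⊤ for n = 0). -/
def mord (β : ℕ → ℕ) (n : ℕ) : ℕ∞ :=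
  if n = 0 then ⊤ else (Nat.findGreatest (fun L => bhat β L ∣ n) n : ℕ∞)

/-- 𝒞 is a Sprague-Grundy system of σ_β: its members are nonzero moves and
σ_β satisfies the mex recursion of the take-away game Γ(ℕ^m, 𝒞), i.e. σ_β is the
Sprague-Grundy function of that game. -/
def IsSGSystem (β : ℕ → ℕ) {m : ℕ} (𝒞 : Set (Fin m → ℕ)) : Prop :=
  (∀ C ∈ 𝒞, C ≠ 0) ∧
  ∀ X : Fin m → ℕ, msigma β X =
    sInf {n : ℕ | ∀ C ∈ 𝒞, (∀ i, C i ≤ X i) → msigma β (fun i => X i - C i) ≠ n}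

section Aux
variable {β : ℕ → ℕ}

lemma bhat_pos (hβ : ∀ L, 2 ≤ β L) (L : ℕ) : 0 < bhat β L :=
  Finset.prod_pos fun i _ => lt_of_lt_of_le two_pos (hβ i)

lemma two_pow_le_bhat (hβ : ∀ L, 2 ≤ β L) (L : ℕ) : 2 ^ L ≤ bhat β L := by
  unfold bhat
  calc 2 ^ L = ∏ _i ∈ Finset.range L, 2 := by simp
    _ ≤ ∏ i ∈ Finset.range L, β i := Finset.prod_le_prod (fun _ _ => by norm_num) (fun i _ => hβ i)

lemma bhat_succ (L : ℕ) : bhat β (L + 1) = bhat β L * β L := Finset.prod_range_succ β L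

lemma bhat_mono (hβ : ∀ L, 2 ≤ β L) {K N : ℕ} (h : N ≤ K) : bhat β N ≤ bhat β K :=
  Nat.le_of_dvd (bhat_pos hβ K)
    (Finset.prod_dvd_prod_of_subset _ _ β (Finset.range_subset_range.mpr h))

lemma mod_mul_aux (n a b : ℕ) : n % (a * b) = n % a + n / a % b * a := by
  rcases Nat.eq_zero_or_pos a with rfl | ha
  · simp
  rcases Nat.eq_zero_or_pos b with rfl | hb
  · simp [Nat.mod_add_div']
  have h1 : n = (n % a + n / a % b * a) + a * b * (n / a / b) := by
    conv_lhs => rw [← Nat.div_add_mod n a, ← Nat.div_add_mod (n / a) b]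
    ring
  have h2 : n % a + n / a % b * a < a * b := by
    have := Nat.mod_lt n ha
    have := Nat.mod_lt (n / a) hb
    calc n % a + n / a % b * a < a + (b - 1) * a := by
          apply Nat.add_lt_add_of_lt_of_le ‹n % a < a›
          exact Nat.mul_le_mul_right a (by omega)
      _ = a * b := by cases b with | zero => omega | succ b => simp [Nat.succ_sub_one]; ring
  conv_lhs => rw [h1]
  rw [Nat.add_mul_mod_self_left, Nat.mod_eq_of_lt h2]

/-- Expansion: partial digit sums give `n % bhat β N`. -/
lemma sum_digits_eq_mod (n N : ℕ) :
    ∑ L ∈ Finset.range N, mdigit β n L * bhat β L = n % bhat β N := by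
  induction N with
  | zero => simp [bhat, Nat.mod_one]
  | succ N ih =>
    rw [Finset.sum_range_succ, ih, bhat_succ, mod_mul_aux n (bhat β N) (β N)]
    rfl

lemma eq_of_digits_eq (hβ : ∀ L, 2 ≤ β L) {a b : ℕ}
    (h : ∀ L, mdigit β a L = mdigit β b L) : a = b := by
  set N := a + b + 1 with hN
  have ha : a < bhat β N := lt_of_lt_of_le (by calc a < N := by omega
    _ < 2 ^ N := (Nat.lt_two_pow_self (n := N))) (two_pow_le_bhat hβ N)
  have hb : b < bhat β N := lt_of_lt_of_le (by calc b < N := by omega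
    _ < 2 ^ N := (Nat.lt_two_pow_self (n := N))) (two_pow_le_bhat hβ N)
  calc a = a % bhat β N := (Nat.mod_eq_of_lt ha).symm
    _ = ∑ L ∈ Finset.range N, mdigit β a L * bhat β L := (sum_digits_eq_mod a N).symm
    _ = ∑ L ∈ Finset.range N, mdigit β b L * bhat β L := by simp [h]
    _ = b % bhat β N := sum_digits_eq_mod b N
    _ = b := Nat.mod_eq_of_lt hb

lemma sum_lt_bhat (hβ : ∀ L, 2 ≤ β L) (d : ℕ → ℕ) (N : ℕ) (hd : ∀ L < N, d L < β L) :
    ∑ L ∈ Finset.range N, d L * bhat β L < bhat β N := by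
  induction N with
  | zero => simp [bhat]
  | succ N ih =>
    rw [Finset.sum_range_succ, bhat_succ]
    have h1 : ∑ L ∈ Finset.range N, d L * bhat β L < bhat β N :=
      ih fun L hL => hd L (by omega)
    have h2 : d N + 1 ≤ β N := hd N (by omega)
    calc ∑ L ∈ Finset.range N, d L * bhat β L + d N * bhat β N
        < bhat β N + d N * bhat β N := by omega
      _ = (d N + 1) * bhat β N := by ring
      _ ≤ β N * bhat β N := Nat.mul_le_mul_right _ h2
      _ = bhat β N * β N := Nat.mul_comm _ _

lemma bhat_mono' (hβ : ∀ L, 2 ≤ β L) {K N : ℕ} (h : N ≤ K) : bhat β N ∣ bhat β K :=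
  Finset.prod_dvd_prod_of_subset _ _ β (Finset.range_subset_range.mpr h)

/-- Digit extraction from a digit sum. -/
lemma mdigit_sum (hβ : ∀ L, 2 ≤ β L) (d : ℕ → ℕ) (N : ℕ) (hd : ∀ L < N, d L < β L) (K : ℕ) :
    mdigit β (∑ L ∈ Finset.range N, d L * bhat β L) K = if K < N then d K else 0 := by
  split_ifs with hK
  · -- split range N at K
    have hsplit : Finset.range N = Finset.range (K + 1) ∪ Finset.Ico (K + 1) N := by
      rw [Finset.range_eq_Ico, Finset.range_eq_Ico]
      exact (Finset.Ico_union_Ico_eq_Ico (a := 0) (b := K + 1) (c := N) (by omega) (by omega)).symm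
    have hdisj : Disjoint (Finset.range (K + 1)) (Finset.Ico (K + 1) N) := by
      simp [Finset.disjoint_left]; omega
    rw [hsplit, Finset.sum_union hdisj, Finset.sum_range_succ]
    have hA : ∑ L ∈ Finset.range K, d L * bhat β L < bhat β K :=
      sum_lt_bhat hβ d K fun L hL => hd L (by omega)
    have hdvd : bhat β K * β K ∣ ∑ L ∈ Finset.Ico (K + 1) N, d L * bhat β L := by
      apply Finset.dvd_sum
      intro L hL
      simp only [Finset.mem_Ico] at hL
      exact Dvd.dvd.mul_left (bhat_succ K ▸ bhat_mono' hβ hL.1) (d L)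
    obtain ⟨c, hc⟩ := hdvd
    rw [hc]
    unfold mdigit
    have : ∑ L ∈ Finset.range K, d L * bhat β L + d K * bhat β K + bhat β K * β K * c
        = ∑ L ∈ Finset.range K, d L * bhat β L + bhat β K * (d K + β K * c) := by ring
    rw [this, Nat.add_mul_div_left _ _ (bhat_pos hβ K), Nat.div_eq_of_lt hA, Nat.zero_add,
      Nat.add_mul_mod_self_left, Nat.mod_eq_of_lt (hd K hK)]
  · unfold mdigit
    rw [Nat.div_eq_of_lt, Nat.zero_mod]
    exact lt_of_lt_of_le (sum_lt_bhat hβ d N hd) (bhat_mono hβ (by omega))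

/-- The digits of msigma. -/
lemma mdigit_msigma (hβ : ∀ L, 2 ≤ β L) {m : ℕ} (X : Fin m → ℕ) (K : ℕ) :
    mdigit β (msigma β X) K = (∑ i, mdigit β (X i) K) % β K := by
  unfold msigma
  rw [mdigit_sum hβ _ _ (fun L _ => Nat.mod_lt _ (by have := hβ L; omega)) K]
  split_ifs with hK
  · rfl
  · push_neg at hK
    have : ∀ i, mdigit β (X i) K = 0 := by
      intro i
      have hX : X i ≤ ∑ j, X j := Finset.single_le_sum (fun j _ => Nat.zero_le _) (Finset.mem_univ i)
      have : X i < bhat β K :=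
        lt_of_lt_of_le (lt_trans (by omega : X i < K) (Nat.lt_two_pow_self (n := K)))
          (two_pow_le_bhat hβ K)
      unfold mdigit
      rw [Nat.div_eq_of_lt this, Nat.zero_mod]
    simp [this]

end Aux

/-- If F ∈ ℱ^β (i.e. σ_β(X+F) = σ_β(X) for some X), then the 0-th digit of
σ_β(F) is 0 and F̂ + r ∈ ℱ^{β̂} for some r ∈ ρ(F). -/


theorem stmt10 (β : ℕ → ℕ) (hβ : ∀ L, 2 ≤ β L) {m : ℕ} (F X : Fin m → ℕ)
    (hF : msigma β (fun i => X i + F i) = msigma β X) :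
    mdigit β (msigma β F) 0 = 0 ∧
    ∃ r : Fin m → ℕ, (∀ i, r i ≤ 1 ∧ r i ≤ F i % β 0) ∧
      ∃ Y : Fin m → ℕ,
        msigma (fun L => β (L + 1)) (fun i => Y i + (F i / β 0 + r i)) =
          msigma (fun L => β (L + 1)) Y := by
  have hβ0 : 0 < β 0 := by have := hβ 0; omega
  have hd : ∀ L, (∑ i, mdigit β (X i + F i) L) % β L = (∑ i, mdigit β (X i) L) % β L := by
    intro L
    have h := congrArg (fun n => mdigit β n L) hF
    simpa [mdigit_msigma hβ] using h
  constructor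
  · rw [mdigit_msigma hβ]
    have hm0 : ∀ n : ℕ, mdigit β n 0 = n % β 0 := by
      intro n; unfold mdigit bhat; simp
    have h0 := hd 0
    simp only [hm0] at h0 ⊢
    rw [← Finset.sum_nat_mod, ← Finset.sum_nat_mod, Finset.sum_add_distrib] at h0
    have hc : (∑ i, X i) + (∑ i, F i) ≡ (∑ i, X i) + 0 [MOD β 0] := by
      simpa [Nat.ModEq] using h0
    have hB := Nat.ModEq.add_left_cancel' _ hc
    rw [← Finset.sum_nat_mod]
    simpa [Nat.ModEq] using hB
  · refine ⟨fun i => if β 0 ≤ X i % β 0 + F i % β 0 then 1 else 0, ?_, fun i => X i / β 0, ?_⟩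
    · intro i
      simp only
      constructor
      · split_ifs <;> omega
      · split_ifs with h
        · have := Nat.mod_lt (X i) hβ0; omega
        · omega
    · set β' := fun L => β (L + 1) with hβ'
      have hβ'2 : ∀ L, 2 ≤ β' L := fun L => hβ (L + 1)
      apply eq_of_digits_eq hβ'2
      intro K
      rw [mdigit_msigma hβ'2, mdigit_msigma hβ'2]
      have hshift : ∀ n L, mdigit β' (n / β 0) L = mdigit β n (L + 1) := by
        intro n L
        unfold mdigit
        have hb : bhat β (L + 1) = β 0 * bhat β' L := by
          unfold bhat
          rw [Finset.prod_range_succ']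
          ring
        rw [Nat.div_div_eq_div_mul, ← hb]
      have hcarry : ∀ i, X i / β 0 + (F i / β 0 +
          (if β 0 ≤ X i % β 0 + F i % β 0 then 1 else 0)) = (X i + F i) / β 0 := by
        intro i
        rw [Nat.add_div hβ0]; ring
      simp only [hcarry, hshift]
      exact hd (K + 1)
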